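/- The L.P.R. procedure does not satisfy the Condorcet winner criterion: there exists a preference profile (for example, for 3 alternatives a, b, c and 7 voters, with 2 voters having list (a, b, c), 2 voters (a, c, b), 2 voters (b, c, a) and 1 voter (c, b, a)) in which alternative a is the Condorcet winner but a is not an L.P.R. winner. -/

import Mathlib

open Finset

attribute [local instance] Classical.propDecidable

noncomputable section

/-- A preference profile for `n` voters: each voter has a ballot, a list of
alternatives ordered from most preferred (head) to least preferred (last). -/
abbrev Profile (n : ℕ) (A : Type*) := Fin n → List A

variable {A : Type*} [DecidableEq A]

/-- A valid profile: every ballot is a strict linear order on the alternatives,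
i.e. a duplicate-free list containing every alternative. -/
def IsProfile {n : ℕ} (P : Profile n A) : Prop :=
  ∀ i, (P i).Nodup ∧ ∀ a : A, a ∈ P i

/-- The voter with ballot `l` prefers `x` to `y`. -/
def Prefers (l : List A) (x y : A) : Prop := l.idxOf x < l.idxOf y

/-- The number of voters who rank `a` last (at the bottom of their list). -/
def lastCount {n : ℕ} (P : Profile n A) (a : A) : ℕ :=
  (univ.filter fun i => (P i).getLast? = some a).card

/-- The number of voters who rank `a` first (at the top of their list). -/
def firstCount {n : ℕ} (P : Profile n A) (a : A) : ℕ :=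
  (univ.filter fun i => (P i).head? = some a).card

/-- The number of voters preferring `x` to `y`. -/
def prefCount {n : ℕ} (P : Profile n A) (x y : A) : ℕ :=
  (univ.filter fun i => Prefers (P i) x y).card

/-- `x` defeats `y` in a pairwise majority contest: strictly more voters
prefer `x` to `y` than prefer `y` to `x`. -/
def Defeats {n : ℕ} (P : Profile n A) (x y : A) : Prop :=
  prefCount P y x < prefCount P x y

/-- Condorcet's method: the winners are the alternatives defeated by no other alternative. -/
def CondorcetWinners {n : ℕ} (P : Profile n A) : Set A :=
  {a | ∀ b, ¬ Defeats P b a}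

/-- `a` is a Condorcet winner: it is the unique winner of Condorcet's method. -/
def IsCondorcetWinner {n : ℕ} (P : Profile n A) (a : A) : Prop :=
  CondorcetWinners P = {a}

/-- The bottom alternative of ballot `l` among the still-remaining alternatives `S`. -/
def bottomAmong (S : Finset A) (l : List A) : Option A :=
  (l.filter fun x => decide (x ∈ S)).getLast?

/-- The number of voters ranking `a` last among the remaining alternatives `S`. -/
def hLastCount {n : ℕ} (P : Profile n A) (S : Finset A) (a : A) : ℕ :=
  (univ.filter fun i => bottomAmong S (P i) = some a).card

/-- One round of the L.P.R. procedure: delete from `S` the alternative(s)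
currently appearing at the bottom of the largest number of lists,
i.e. keep those that are not maximal. -/
def lprStep {n : ℕ} (P : Profile n A) (S : Finset A) : Finset A :=
  S.filter fun a => ∃ b ∈ S, hLastCount P S a < hLastCount P S b

/-- Iterating the L.P.R. rounds; once a round would delete every remaining
alternative, the process stops (those alternatives are the ones deleted last). -/
def lprIter {n : ℕ} [Fintype A] (P : Profile n A) : ℕ → Finset A
  | 0 => Finset.univ
  | k + 1 =>
      let S := lprIter P k
      if lprStep P S = ∅ then S else lprStep P S

/-- L.P.R. winners: the alternative(s) deleted in the final round. -/
def LPRWinners {n : ℕ} [Fintype A] (P : Profile n A) : Finset A :=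
  lprIter P (Fintype.card A)

/-! With a, b, c encoded as `0, 1, 2`: in the seven-voter profile a beats both b and c by 4 votes
to 3, yet a sits at the bottom of three ballots against two each for b and c, so L.P.R. deletes a
in the first round. Among b and c, c is last on four ballots and b on three, so c goes next and
b is the L.P.R. winner. -/

section General

variable {n : ℕ}

-- `prefCount` is elaborated with a classical decidability instance; this form evaluates.
theorem prefCount_eq_card_filter (P : Profile n A) (x y : A) :
    prefCount P x y = #{i | (P i).idxOf x < (P i).idxOf y} := by
  unfold prefCount Prefers
  congr!

theorem isCondorcetWinner_of_forall_defeats {P : Profile n A} {a : A}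
    (h : ∀ b ≠ a, Defeats P a b) : IsCondorcetWinner P a := by
  unfold IsCondorcetWinner
  ext b
  simp only [CondorcetWinners, Set.mem_ofPred_eq, Set.mem_singleton_iff]
  constructor
  · intro hb
    by_contra hba
    exact hb a (h b hba)
  · rintro rfl c hc
    by_cases hcb : c = b
    · subst hcb
      exact lt_irrefl _ hc
    · exact lt_asymm hc (h c hcb)

theorem lprStep_singleton (P : Profile n A) (a : A) : lprStep P {a} = ∅ := by
  ext c
  simp +contextual [lprStep]

variable [Fintype A]

theorem lprIter_succ_eq_of_lprStep_eq {P : Profile n A} {k : ℕ} {S : Finset A}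
    (h : lprStep P (lprIter P k) = S) (hS : S.Nonempty) : lprIter P (k + 1) = S := by
  rw [lprIter, h, if_neg hS.ne_empty]

theorem lprIter_succ_of_eq_singleton {P : Profile n A} {k : ℕ} {a : A}
    (h : lprIter P k = {a}) : lprIter P (k + 1) = {a} := by
  rw [lprIter, h, lprStep_singleton, if_pos rfl]

end General

def sevenVoterProfile : Profile 7 (Fin 3) :=
  ![[0, 1, 2], [0, 1, 2], [0, 2, 1], [0, 2, 1], [1, 2, 0], [1, 2, 0], [2, 1, 0]]

theorem isProfile_sevenVoterProfile : IsProfile sevenVoterProfile := by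
  unfold IsProfile
  decide

theorem prefCount_sevenVoterProfile_zero_left :
    ∀ b ≠ 0, prefCount sevenVoterProfile 0 b = 4 := by
  simp only [prefCount_eq_card_filter]
  decide

theorem prefCount_sevenVoterProfile_zero_right :
    ∀ b ≠ 0, prefCount sevenVoterProfile b 0 = 3 := by
  simp only [prefCount_eq_card_filter]
  decide

theorem isCondorcetWinner_sevenVoterProfile : IsCondorcetWinner sevenVoterProfile 0 :=
  isCondorcetWinner_of_forall_defeats fun b hb => by
    rw [Defeats, prefCount_sevenVoterProfile_zero_left b hb,
      prefCount_sevenVoterProfile_zero_right b hb]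
    decide

theorem hLastCount_sevenVoterProfile_univ :
    hLastCount sevenVoterProfile univ = ![3, 2, 2] := by
  funext a
  fin_cases a <;> decide

theorem hLastCount_sevenVoterProfile_one_two :
    hLastCount sevenVoterProfile {1, 2} = ![0, 3, 4] := by
  funext a
  fin_cases a <;> decide

theorem lprStep_sevenVoterProfile_univ : lprStep sevenVoterProfile univ = {1, 2} := by
  ext a
  simp only [lprStep, mem_filter, hLastCount_sevenVoterProfile_univ]
  revert a
  decide

theorem lprStep_sevenVoterProfile_one_two : lprStep sevenVoterProfile {1, 2} = {1} := by
  ext a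
  simp only [lprStep, mem_filter, hLastCount_sevenVoterProfile_one_two]
  revert a
  decide

theorem lprWinners_sevenVoterProfile : LPRWinners sevenVoterProfile = {1} := by
  have round1 : lprIter sevenVoterProfile 1 = {1, 2} :=
    lprIter_succ_eq_of_lprStep_eq lprStep_sevenVoterProfile_univ (insert_nonempty _ _)
  have round2 : lprIter sevenVoterProfile 2 = {1} :=
    lprIter_succ_eq_of_lprStep_eq (round1 ▸ lprStep_sevenVoterProfile_one_two)
      (singleton_nonempty _)
  exact lprIter_succ_of_eq_singleton round2

/-- the L.P.R. procedure does not satisfy the Condorcet winner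
criterion: there is a profile (3 alternatives, 7 voters) with a Condorcet winner
that is not an L.P.R. winner. -/
theorem lpr_not_CWC :
    ∃ P : Profile 7 (Fin 3), IsProfile P ∧
      ∃ a : Fin 3, IsCondorcetWinner P a ∧ a ∉ LPRWinners P :=
  ⟨sevenVoterProfile, isProfile_sevenVoterProfile, 0, isCondorcetWinner_sevenVoterProfile,
    by rw [lprWinners_sevenVoterProfile]; decide⟩
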